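/- Let X be a Banach space and A ⊆ X* a nonempty bounded set. Then (1/8)·χ_m(A) ≤ sup{ limsup_{k→∞} sup_{x*∈A} |x*(x_k)| : (x_k) is a weakly null sequence in B_X } ≤ χ_m(A). -/

import Mathlib

open Filter Metric Set NormedSpace
open scoped Topology

noncomputable section

/-- The non-symmetrized Hausdorff distance `d̂(A,B) = sup_{a ∈ A} dist(a, B)`,
formulated with an abstract distance function `d`. -/
def hdD {Z : Type*} (d : Z → Z → ℝ) (A B : Set Z) : ℝ :=
  ⨆ a : A, ⨅ b : B, d a b

/-- `χ₀(A) = inf { d̂(A,F) : F ⊆ A finite nonempty }`. -/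
def chi0D {Z : Type*} (d : Z → Z → ℝ) (A : Set Z) : ℝ :=
  sInf {r | ∃ F : Set Z, F ⊆ A ∧ F.Finite ∧ F.Nonempty ∧ r = hdD d A F}

/-- A subset of a normed space is weakly compact if it is compact in the weak topology. -/
def IsWeaklyCompact (𝕜 : Type*) [RCLike 𝕜] {Z : Type*} [NormedAddCommGroup Z]
    [NormedSpace 𝕜 Z] (K : Set Z) : Prop :=
  IsCompact (toWeakSpace 𝕜 Z '' K)

/-- The measure of Mackey non-compactness of a bounded set `A ⊆ X*`:
`χ_m(A) = sup { χ₀(A|_L) : L ⊆ B_X weakly compact }`, where `A|_L ⊆ ℓ∞(L)`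
carries the supremum distance. -/
def chiMackey (𝕜 : Type*) [RCLike 𝕜] {X : Type*} [NormedAddCommGroup X] [NormedSpace 𝕜 X]
    (A : Set (StrongDual 𝕜 X)) : ℝ :=
  sSup {r | ∃ L : Set X, L ⊆ closedBall (0 : X) 1 ∧ IsWeaklyCompact 𝕜 L ∧
    r = chi0D (fun u v : ↥L → 𝕜 => ⨆ y : L, ‖u y - v y‖)
      ((fun φ : StrongDual 𝕜 X => fun y : L => φ (y : X)) '' A)}

/-
Upper bound: for a weakly null sequence `(x_k)` in `B_X`, the set `L = {0} ∪ {x_k}` is weakly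
compact, and for any finite net `F` of `A|_L` the functionals in `F` tend to `0` along `x_k`, so
`limsup_k sup_A |x*(x_k)| ≤ d̂(A|_L, F)`.

Lower bound: if `χ₀(A|_L) > r > 0`, one picks inductively `x*_n ∈ A` that are pairwise `r`-apart
on `L`, with witnesses `w_{mn} ∈ L`. All witnesses lie in a separable closed subspace `Y`; by
sequential Banach–Alaoglu a subsequence of `(x*_n)` converges pointwise on `Y`, and since the
weak topology is metrizable on the weakly compact set `L ∩ Y`, a subsequence of the consecutive
witnesses `v_j` converges weakly to some `y ∈ Y`. Then `((v_j - y)/2)` is weakly null in `B_X`,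
while `x*_{n+1} - x*_n` is `> r` at `v_j` and eventually `< r/2` at `y`, so
`sup_A |x*((v_j - y)/2)| > r/8` eventually; hence `χ₀(A|_L) ≤ 8 · sup limsup`.
-/

open TopologicalSpace

section HausdorffExcess

variable {Z : Type*} {d : Z → Z → ℝ} {A B : Set Z}

theorem hdD_nonneg (hd : ∀ u v, 0 ≤ d u v) : 0 ≤ hdD d A B :=
  Real.iSup_nonneg fun _ => Real.iInf_nonneg fun _ => hd _ _

theorem iInf_le_of_mem_of_nonneg (hd : ∀ u v, 0 ≤ d u v) (a : Z) {b : Z} (hb : b ∈ B) :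
    ⨅ b' : B, d a b' ≤ d a b :=
  ciInf_le ⟨0, by rintro _ ⟨_, rfl⟩; exact hd _ _⟩ (⟨b, hb⟩ : B)

theorem hdD_le_of_forall_exists_le {c : ℝ} (hd : ∀ u v, 0 ≤ d u v) (hc : 0 ≤ c)
    (h : ∀ a ∈ A, ∃ b ∈ B, d a b ≤ c) : hdD d A B ≤ c :=
  Real.iSup_le (fun a => by
    obtain ⟨b, hb, hab⟩ := h a a.2
    exact (iInf_le_of_mem_of_nonneg hd _ hb).trans hab) hc

theorem iInf_le_hdD {C : ℝ} (hd : ∀ u v, 0 ≤ d u v) (hC : ∀ a ∈ A, ∀ b ∈ B, d a b ≤ C)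
    (hB : B.Nonempty) {a : Z} (ha : a ∈ A) : ⨅ b : B, d a b ≤ hdD d A B := by
  obtain ⟨b₀, hb₀⟩ := hB
  refine le_ciSup (f := fun a : A => ⨅ b : B, d a b) ⟨C, ?_⟩ ⟨a, ha⟩
  rintro _ ⟨a', rfl⟩
  exact (iInf_le_of_mem_of_nonneg hd _ hb₀).trans (hC _ a'.2 _ hb₀)

theorem chi0D_le_hdD (hd : ∀ u v, 0 ≤ d u v) {F : Set Z} (hFA : F ⊆ A) (hF : F.Finite)
    (hFne : F.Nonempty) : chi0D d A ≤ hdD d A F :=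
  csInf_le ⟨0, by rintro _ ⟨G, -, -, -, rfl⟩; exact hdD_nonneg hd⟩ ⟨F, hFA, hF, hFne, rfl⟩

theorem le_chi0D {c : ℝ} (hA : A.Nonempty)
    (h : ∀ F ⊆ A, F.Finite → F.Nonempty → c ≤ hdD d A F) : c ≤ chi0D d A := by
  obtain ⟨a, ha⟩ := hA
  refine le_csInf ⟨_, {a}, singleton_subset_iff.2 ha, finite_singleton a, singleton_nonempty a,
    rfl⟩ ?_
  rintro _ ⟨F, hFA, hF, hFne, rfl⟩
  exact h F hFA hF hFne

theorem exists_forall_lt_of_lt_chi0D (hd : ∀ u v, 0 ≤ d u v) {F : Set Z} (hFA : F ⊆ A)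
    (hF : F.Finite) (hFne : F.Nonempty) {r : ℝ} (hr : r < chi0D d A) :
    ∃ a ∈ A, ∀ b ∈ F, r < d a b := by
  have : Nonempty A := (hFne.mono hFA).to_subtype
  have h := hr.trans_le (chi0D_le_hdD hd hFA hF hFne)
  rw [hdD] at h
  obtain ⟨a, ha⟩ := exists_lt_of_lt_ciSup h
  exact ⟨a, a.2, fun b hb => ha.trans_le (iInf_le_of_mem_of_nonneg hd _ hb)⟩

end HausdorffExcess

section WeakSequentialCompactness

variable {𝕜 : Type*} [RCLike 𝕜] {X : Type*} [NormedAddCommGroup X] [NormedSpace 𝕜 X]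

theorem Submodule.isClosed_toWeakSpace_image {Y : Submodule 𝕜 X} (hY : IsClosed (Y : Set X)) :
    IsClosed (toWeakSpace 𝕜 X '' Y) := by
  let _ : NormedSpace ℝ X := NormedSpace.restrictScalars ℝ 𝕜 X
  have h := (Y.restrictScalars ℝ).convex.toWeakSpace_closure 𝕜
  rw [Submodule.coe_restrictScalars, hY.closure_eq] at h
  exact h ▸ isClosed_closure

theorem Submodule.exists_seq_dual_separating {Y : Submodule 𝕜 X} (hY : IsSeparable (Y : Set X)) :
    ∃ g : ℕ → StrongDual 𝕜 X, ∀ z ∈ Y, (∀ n, g n z = 0) → z = 0 := by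
  have := hY.separableSpace
  choose g hg1 hgu using fun n => exists_dual_vector'' 𝕜 (denseSeq Y n).1
  refine ⟨g, fun z hz hgz => ?_⟩
  by_contra hz0
  obtain ⟨n, hn⟩ := (denseRange_denseSeq Y).exists_dist_lt ⟨z, hz⟩ (half_pos (norm_pos_iff.2 hz0))
  set u : X := (denseSeq Y n).1
  have hzu : ‖z - u‖ < ‖z‖ / 2 := by simpa [dist_eq_norm, u] using hn
  have hgzu : ‖g n (z - u)‖ ≤ ‖z - u‖ :=
    ((g n).le_opNorm _).trans (mul_le_of_le_one_left (norm_nonneg _) (hg1 n))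
  rw [map_sub, hgz, zero_sub, norm_neg, hgu, RCLike.norm_ofReal, abs_norm] at hgzu
  linarith [norm_sub_norm_le z u]

/-- The weak topology is metrizable on the weakly compact set `L ∩ Y`, since countably many
functionals separate the points of the separable space `Y`. -/
theorem IsWeaklyCompact.exists_subseq_tendsto {L : Set X} (hL : IsWeaklyCompact 𝕜 L)
    {Y : Submodule 𝕜 X} (hYc : IsClosed (Y : Set X)) (hYs : IsSeparable (Y : Set X))
    {v : ℕ → X} (hv : ∀ n, v n ∈ L ∩ Y) :
    ∃ y ∈ L ∩ Y, ∃ σ : ℕ → ℕ, StrictMono σ ∧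
      ∀ φ : StrongDual 𝕜 X, Tendsto (fun k => φ (v (σ k))) atTop (𝓝 (φ y)) := by
  set e := toWeakSpace 𝕜 X
  have heval : ∀ φ : StrongDual 𝕜 X, Continuous fun w : WeakSpace 𝕜 X => φ (e.symm w) :=
    WeakBilin.eval_continuous (topDualPairing 𝕜 X).flip
  have hK : IsCompact (e '' (L ∩ Y)) := by
    rw [image_inter e.injective]
    exact hL.inter_right (Submodule.isClosed_toWeakSpace_image hYc)
  have := isCompact_iff_compactSpace.mp hK
  obtain ⟨g, hg⟩ := Submodule.exists_seq_dual_separating hYs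
  have : MetrizableSpace (e '' (L ∩ Y)) :=
    Metric.PiNatEmbed.TopologicalSpace.MetrizableSpace.of_countable_separating
      (fun n (w : e '' (L ∩ Y)) => g n (e.symm w))
      (fun n => (heval (g n)).comp continuous_subtype_val) fun w w' hne => by
        obtain ⟨_, ⟨a, ha, rfl⟩⟩ := w
        obtain ⟨_, ⟨b, hb, rfl⟩⟩ := w'
        by_contra! h
        refine hne (Subtype.ext (congrArg e (sub_eq_zero.mp ?_)))
        exact hg _ (Y.sub_mem ha.2 hb.2) fun n => by simpa [sub_eq_zero] using h n
  have hseq : IsSeqCompact (e '' (L ∩ Y)) := by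
    have h := IsSeqCompact.range (continuous_iff_seqContinuous.mp
      (continuous_subtype_val : Continuous fun w : e '' (L ∩ Y) => (w : WeakSpace 𝕜 X)))
    rwa [Subtype.range_coe] at h
  obtain ⟨_, ⟨y, hy, rfl⟩, σ, hσ, hlim⟩ := hseq fun n => mem_image_of_mem e (hv n)
  exact ⟨y, hy, σ, hσ, fun φ => ((heval φ).tendsto (e y)).comp hlim⟩

/-- Sequential Banach–Alaoglu, applied to the restrictions to `Y`. -/
theorem exists_subseq_tendsto_on_separable {Y : Submodule 𝕜 X} (hY : IsSeparable (Y : Set X))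
    {Φ : ℕ → StrongDual 𝕜 X} {M : ℝ} (hΦ : ∀ n, ‖Φ n‖ ≤ M) :
    ∃ σ : ℕ → ℕ, StrictMono σ ∧ ∀ y ∈ Y, ∃ c, Tendsto (fun k => Φ (σ k) y) atTop (𝓝 c) := by
  have := hY.separableSpace
  have hmem : ∀ n, StrongDual.toWeakDual ((Φ n).comp Y.subtypeL) ∈
      WeakDual.toStrongDual ⁻¹' closedBall (0 : StrongDual 𝕜 Y) M := fun n => by
    have h := ((Φ n).opNorm_comp_le Y.subtypeL).trans
      (mul_le_of_le_one_right (norm_nonneg _) Y.norm_subtypeL_le)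
    simpa using h.trans (hΦ n)
  obtain ⟨ψ, -, σ, hσ, hlim⟩ := WeakDual.isSeqCompact_closedBall 𝕜 Y 0 M hmem
  exact ⟨σ, hσ, fun y hy => ⟨ψ ⟨y, hy⟩, ((WeakDual.eval_continuous _).tendsto ψ).comp hlim⟩⟩

theorem isWeaklyCompact_insert_zero_range {x : ℕ → X}
    (hx : ∀ φ : StrongDual 𝕜 X, Tendsto (fun k => φ (x k)) atTop (𝓝 0)) :
    IsWeaklyCompact 𝕜 (insert 0 (range x)) := by
  have hinj : Function.Injective (topDualPairing 𝕜 X).flip :=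
    separatingDual_iff_injective.mp inferInstance
  have hlim : Tendsto (fun k => toWeakSpace 𝕜 X (x k)) atTop (𝓝 (toWeakSpace 𝕜 X 0)) :=
    (WeakBilin.tendsto_iff_forall_eval_tendsto _ hinj).mpr fun φ => (map_zero φ).symm ▸ hx φ
  rw [IsWeaklyCompact, image_insert_eq, ← range_comp]
  exact hlim.isCompact_insert_range

end WeakSequentialCompactness

section MackeyMeasure

variable {𝕜 : Type*} [RCLike 𝕜] {X : Type*} [NormedAddCommGroup X] [NormedSpace 𝕜 X]
  {A : Set (StrongDual 𝕜 X)} {L : Set X} {M r : ℝ}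

/-- `χ₀(A|_L)`. -/
def chiOn (A : Set (StrongDual 𝕜 X)) (L : Set X) : ℝ :=
  chi0D (fun u v : ↥L → 𝕜 => ⨆ y : L, ‖u y - v y‖)
    ((fun φ : StrongDual 𝕜 X => fun y : L => φ (y : X)) '' A)

theorem chiMackey_eq_sSup_chiOn (A : Set (StrongDual 𝕜 X)) :
    chiMackey 𝕜 A =
      sSup {r | ∃ L ⊆ closedBall (0 : X) 1, IsWeaklyCompact 𝕜 L ∧ r = chiOn A L} :=
  rfl

def supNormOn (A : Set (StrongDual 𝕜 X)) (x : X) : ℝ :=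
  ⨆ φ : A, ‖(φ : StrongDual 𝕜 X) x‖

def weaklyNullLimsups (A : Set (StrongDual 𝕜 X)) : Set ℝ :=
  {r | ∃ x : ℕ → X, (∀ k, x k ∈ closedBall (0 : X) 1) ∧
    (∀ φ : StrongDual 𝕜 X, Tendsto (fun k => φ (x k)) atTop (𝓝 0)) ∧
    r = limsup (fun k => supNormOn A (x k)) atTop}

theorem iSup_norm_sub_nonneg {ι : Type*} (u v : ι → 𝕜) : 0 ≤ ⨆ y, ‖u y - v y‖ :=
  Real.iSup_nonneg fun _ => norm_nonneg _

theorem supNormOn_nonneg (A : Set (StrongDual 𝕜 X)) (x : X) : 0 ≤ supNormOn A x :=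
  Real.iSup_nonneg fun _ => norm_nonneg _

theorem supNormOn_le (hM : ∀ φ ∈ A, ‖φ‖ ≤ M) (hM0 : 0 ≤ M) {x : X}
    (hx : x ∈ closedBall (0 : X) 1) : supNormOn A x ≤ M :=
  Real.iSup_le (fun φ => (φ.1.le_opNorm_of_le (mem_closedBall_zero_iff.mp hx)).trans
    (by simpa using hM φ.1 φ.2)) hM0

theorem norm_apply_le_supNormOn (hM : ∀ φ ∈ A, ‖φ‖ ≤ M) {φ : StrongDual 𝕜 X} (hφ : φ ∈ A)
    (x : X) : ‖φ x‖ ≤ supNormOn A x :=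
  le_ciSup (f := fun φ : A => ‖(φ : StrongDual 𝕜 X) x‖)
    ⟨M * ‖x‖, by
      rintro _ ⟨ψ, rfl⟩
      exact (ψ.1.le_opNorm x).trans (mul_le_mul_of_nonneg_right (hM _ ψ.2) (norm_nonneg x))⟩
    ⟨φ, hφ⟩

theorem zero_mem_weaklyNullLimsups (A : Set (StrongDual 𝕜 X)) : (0 : ℝ) ∈ weaklyNullLimsups A :=
  ⟨0, fun _ => mem_closedBall_self zero_le_one, fun φ => by simp, by simp [supNormOn]⟩

theorem le_of_mem_weaklyNullLimsups (hM : ∀ φ ∈ A, ‖φ‖ ≤ M) (hM0 : 0 ≤ M) {r : ℝ}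
    (hr : r ∈ weaklyNullLimsups A) : r ≤ M := by
  obtain ⟨x, hx, -, rfl⟩ := hr
  exact limsup_le_of_le (isCoboundedUnder_le_of_le atTop fun k => supNormOn_nonneg A (x k))
    (Eventually.of_forall fun k => supNormOn_le hM hM0 (hx k))

theorem norm_apply_sub_le_of_mem_closedBall (φ ψ : StrongDual 𝕜 X) {y : X}
    (hy : y ∈ closedBall (0 : X) 1) : ‖φ y - ψ y‖ ≤ ‖φ - ψ‖ := by
  simpa using (φ - ψ).le_opNorm_of_le (mem_closedBall_zero_iff.mp hy)

theorem norm_apply_sub_le_iSup (hL : L ⊆ closedBall (0 : X) 1) (φ ψ : StrongDual 𝕜 X)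
    (y : L) : ‖φ y - ψ y‖ ≤ ⨆ y : L, ‖φ y - ψ y‖ :=
  le_ciSup (f := fun y : L => ‖φ y - ψ y‖)
    ⟨‖φ - ψ‖, by
      rintro _ ⟨y', rfl⟩
      exact norm_apply_sub_le_of_mem_closedBall φ ψ (hL y'.2)⟩ y

theorem iSup_norm_apply_sub_le (hL : L ⊆ closedBall (0 : X) 1) (hM : ∀ φ ∈ A, ‖φ‖ ≤ M)
    {φ ψ : StrongDual 𝕜 X} (hφ : φ ∈ A) (hψ : ψ ∈ A) : ⨆ y : L, ‖φ y - ψ y‖ ≤ 2 * M :=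
  Real.iSup_le (fun y => (norm_apply_sub_le_of_mem_closedBall φ ψ (hL y.2)).trans <|
      (norm_sub_le φ ψ).trans (by linarith [hM φ hφ, hM ψ hψ]))
    (by linarith [(norm_nonneg φ).trans (hM φ hφ)])

theorem chiOn_le_two_mul (hA : A.Nonempty) (hM : ∀ φ ∈ A, ‖φ‖ ≤ M)
    (hL : L ⊆ closedBall (0 : X) 1) : chiOn A L ≤ 2 * M := by
  obtain ⟨φ₀, hφ₀⟩ := hA
  refine (chi0D_le_hdD iSup_norm_sub_nonneg (singleton_subset_iff.2 (mem_image_of_mem _ hφ₀))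
    (finite_singleton _) (singleton_nonempty _)).trans
    (hdD_le_of_forall_exists_le iSup_norm_sub_nonneg ?_ ?_)
  · linarith [(norm_nonneg φ₀).trans (hM φ₀ hφ₀)]
  · rintro _ ⟨φ, hφ, rfl⟩
    exact ⟨_, rfl, iSup_norm_apply_sub_le hL hM hφ hφ₀⟩

theorem limsup_supNormOn_le_chiOn (hA : A.Nonempty) (hM : ∀ φ ∈ A, ‖φ‖ ≤ M)
    (hL : L ⊆ closedBall (0 : X) 1) {x : ℕ → X} (hxL : ∀ k, x k ∈ L)
    (hx : ∀ φ : StrongDual 𝕜 X, Tendsto (fun k => φ (x k)) atTop (𝓝 0)) :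
    limsup (fun k => supNormOn A (x k)) atTop ≤ chiOn A L := by
  refine le_chi0D (hA.image _) fun F hFA hF hFne => le_of_forall_pos_le_add fun ε hε => ?_
  have hsmall : ∀ᶠ k in atTop, ∀ f ∈ F, ‖f ⟨x k, hxL k⟩‖ ≤ ε := by
    refine hF.eventually_all.2 fun f hf => ?_
    obtain ⟨ψ, -, rfl⟩ := hFA hf
    exact ((hx ψ).norm.eventually (ge_mem_nhds (by simpa using hε))).mono fun _ h => h
  refine limsup_le_of_le (isCoboundedUnder_le_of_le atTop fun k => supNormOn_nonneg A (x k))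
    (hsmall.mono fun k hk =>
      Real.iSup_le (fun φ => ?_) (add_nonneg (hdD_nonneg iSup_norm_sub_nonneg) hε.le))
  have hinf : ‖(φ : StrongDual 𝕜 X) (x k)‖ - ε ≤ ⨅ f : F, ⨆ y : L, ‖φ.1 y - f.1 y‖ := by
    have := hFne.to_subtype
    refine le_ciInf fun f => ?_
    obtain ⟨ψ, -, hψ⟩ := hFA f.2
    have h := norm_apply_sub_le_iSup hL φ ψ ⟨x k, hxL k⟩
    have hfx := hk f f.2
    rw [← hψ] at hfx ⊢
    linarith [norm_le_norm_add_norm_sub' (φ.1 (x k)) (ψ (x k))]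
  have hC : ∀ a ∈ (fun φ : StrongDual 𝕜 X => fun y : L => φ (y : X)) '' A, ∀ b ∈ F,
      ⨆ y : L, ‖a y - b y‖ ≤ 2 * M := by
    rintro _ ⟨φ', hφ', rfl⟩ b hb
    obtain ⟨ψ, hψ, rfl⟩ := hFA hb
    exact iSup_norm_apply_sub_le hL hM hφ' hψ
  linarith [iInf_le_hdD iSup_norm_sub_nonneg hC hFne (mem_image_of_mem _ φ.2)]

theorem exists_separated_seq_of_lt_chiOn (hA : A.Nonempty) (hr0 : 0 < r) (hr : r < chiOn A L) :
    ∃ (Φ : ℕ → StrongDual 𝕜 X) (W : ℕ → ℕ → X), (∀ n, Φ n ∈ A) ∧ (∀ m n, W m n ∈ L) ∧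
      ∀ m n, m < n → r < ‖Φ n (W m n) - Φ m (W m n)‖ := by
  obtain ⟨Φ, hΦA, hsep⟩ := exists_seq_of_forall_finset_exists (· ∈ A)
    (fun ψ φ => r < ⨆ y : L, ‖φ y - ψ y‖) fun s hs => by
      rcases s.eq_empty_or_nonempty with rfl | hne
      · obtain ⟨φ, hφ⟩ := hA
        exact ⟨φ, hφ, by simp⟩
      · obtain ⟨_, ⟨φ, hφ, rfl⟩, h⟩ := exists_forall_lt_of_lt_chi0D iSup_norm_sub_nonneg
          (image_mono (s := (s : Set (StrongDual 𝕜 X))) hs) (s.finite_toSet.image _)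
          (hne.to_set.image _) hr
        exact ⟨φ, hφ, fun ψ hψ => h _ (mem_image_of_mem _ hψ)⟩
  have hwit : ∀ m n, m < n → ∃ y ∈ L, r < ‖Φ n y - Φ m y‖ := fun m n hmn => by
    have h := hsep m n hmn
    rcases isEmpty_or_nonempty L with hL | hL
    · rw [Real.iSup_of_isEmpty] at h
      exact absurd hr0 h.not_gt
    · obtain ⟨y, hy⟩ := exists_lt_of_lt_ciSup h
      exact ⟨y, y.2, hy⟩
  obtain ⟨y₀, hy₀, -⟩ := hwit 0 1 one_pos
  have hW : ∀ m n, ∃ y ∈ L, m < n → r < ‖Φ n y - Φ m y‖ := fun m n => by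
    by_cases hmn : m < n
    · obtain ⟨y, hy, h⟩ := hwit m n hmn
      exact ⟨y, hy, fun _ => h⟩
    · exact ⟨y₀, hy₀, fun h => absurd h hmn⟩
  choose W hWL hWsep using hW
  exact ⟨Φ, W, hΦA, hWL, hWsep⟩

theorem half_smul_sub_mem_closedBall {v y : X} (hv : v ∈ closedBall (0 : X) 1)
    (hy : y ∈ closedBall (0 : X) 1) : (2 : 𝕜)⁻¹ • (v - y) ∈ closedBall (0 : X) 1 := by
  rw [mem_closedBall_zero_iff] at *
  rw [norm_smul, norm_inv, RCLike.norm_two]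
  linarith [norm_sub_le v y]

theorem lt_norm_apply_half_smul_sub {a b : StrongDual 𝕜 X} {v y : X}
    (hv : r < ‖a v - b v‖) (hy : ‖a y - b y‖ < r / 2) :
    r / 8 < ‖a ((2 : 𝕜)⁻¹ • (v - y))‖ ∨ r / 8 < ‖b ((2 : 𝕜)⁻¹ • (v - y))‖ := by
  have heq : a ((2 : 𝕜)⁻¹ • (v - y)) - b ((2 : 𝕜)⁻¹ • (v - y)) =
      (2 : 𝕜)⁻¹ * ((a v - b v) - (a y - b y)) := by
    simp only [map_smul, map_sub, smul_eq_mul]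
    ring
  have hlow : r / 4 < ‖a ((2 : 𝕜)⁻¹ • (v - y)) - b ((2 : 𝕜)⁻¹ • (v - y))‖ := by
    rw [heq, norm_mul, norm_inv, RCLike.norm_two]
    linarith [norm_sub_norm_le (a v - b v) (a y - b y)]
  by_contra! h
  linarith [norm_sub_le (a ((2 : 𝕜)⁻¹ • (v - y))) (b ((2 : 𝕜)⁻¹ • (v - y)))]

theorem exists_weaklyNull_of_separated (hM : ∀ φ ∈ A, ‖φ‖ ≤ M) (hL : L ⊆ closedBall (0 : X) 1)
    (hLc : IsWeaklyCompact 𝕜 L) (hr0 : 0 < r) {Φ : ℕ → StrongDual 𝕜 X} {W : ℕ → ℕ → X}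
    (hΦA : ∀ n, Φ n ∈ A) (hWL : ∀ m n, W m n ∈ L)
    (hsep : ∀ m n, m < n → r < ‖Φ n (W m n) - Φ m (W m n)‖) :
    ∃ z : ℕ → X, (∀ k, z k ∈ closedBall (0 : X) 1) ∧
      (∀ φ : StrongDual 𝕜 X, Tendsto (fun k => φ (z k)) atTop (𝓝 0)) ∧
      ∀ᶠ k in atTop, r / 8 ≤ supNormOn A (z k) := by
  set Y := (Submodule.span 𝕜 (range (Function.uncurry W))).topologicalClosure
  have hYs : IsSeparable (Y : Set X) := ((countable_range _).isSeparable.span).closure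
  have hWY : ∀ m n, W m n ∈ Y := fun m n =>
    Submodule.le_topologicalClosure _ (Submodule.subset_span ⟨(m, n), rfl⟩)
  obtain ⟨σ, hσ, hΦconv⟩ := exists_subseq_tendsto_on_separable hYs fun n => hM _ (hΦA n)
  obtain ⟨y, ⟨hyL, hyY⟩, τ, hτ, hweak⟩ :=
    hLc.exists_subseq_tendsto (Submodule.isClosed_topologicalClosure _) hYs
      (v := fun j => W (σ j) (σ (j + 1))) fun j => ⟨hWL _ _, hWY _ _⟩
  obtain ⟨c, hc⟩ := hΦconv y hyY
  have hgap : Tendsto (fun k => Φ (σ (τ k + 1)) y - Φ (σ (τ k)) y) atTop (𝓝 0) := by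
    simpa using (hc.comp ((tendsto_add_atTop_nat 1).comp hτ.tendsto_atTop)).sub
      (hc.comp hτ.tendsto_atTop)
  refine ⟨fun k => (2 : 𝕜)⁻¹ • (W (σ (τ k)) (σ (τ k + 1)) - y),
    fun k => half_smul_sub_mem_closedBall (hL (hWL _ _)) (hL hyL), fun φ => ?_, ?_⟩
  · simpa using ((hweak φ).sub_const (φ y)).const_mul (2 : 𝕜)⁻¹
  · filter_upwards [(tendsto_zero_iff_norm_tendsto_zero.mp hgap).eventually
      (gt_mem_nhds (half_pos hr0))] with k hk
    rcases lt_norm_apply_half_smul_sub (hsep _ _ (hσ (Nat.lt_succ_self _))) hk with h | h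
    · exact h.le.trans (norm_apply_le_supNormOn hM (hΦA _) _)
    · exact h.le.trans (norm_apply_le_supNormOn hM (hΦA _) _)

theorem chiOn_le_eight_mul_of_forall_le (hA : A.Nonempty) (hM : ∀ φ ∈ A, ‖φ‖ ≤ M) (hM0 : 0 ≤ M)
    (hL : L ⊆ closedBall (0 : X) 1) (hLc : IsWeaklyCompact 𝕜 L) {s : ℝ} (hs0 : 0 ≤ s)
    (hs : ∀ t ∈ weaklyNullLimsups A, t ≤ s) : chiOn A L ≤ 8 * s := by
  refine le_of_forall_lt_imp_le_of_dense fun r hr => ?_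
  rcases le_or_gt r 0 with hr0 | hr0
  · linarith
  obtain ⟨Φ, W, hΦA, hWL, hsep⟩ := exists_separated_seq_of_lt_chiOn hA hr0 hr
  obtain ⟨z, hzB, hz0, hzr⟩ := exists_weaklyNull_of_separated hM hL hLc hr0 hΦA hWL hsep
  have hlim : r / 8 ≤ limsup (fun k => supNormOn A (z k)) atTop :=
    le_limsup_of_frequently_le hzr.frequently
      (isBoundedUnder_of ⟨M, fun k => supNormOn_le hM hM0 (hzB k)⟩)
  linarith [hs _ ⟨z, hzB, hz0, rfl⟩]

theorem chiMackey_le_eight_mul (hA : A.Nonempty) (hM : ∀ φ ∈ A, ‖φ‖ ≤ M) (hM0 : 0 ≤ M)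
    {s : ℝ} (hs0 : 0 ≤ s) (hs : ∀ t ∈ weaklyNullLimsups A, t ≤ s) :
    chiMackey 𝕜 A ≤ 8 * s := by
  have hempty : IsWeaklyCompact 𝕜 (∅ : Set X) := by simp [IsWeaklyCompact]
  rw [chiMackey_eq_sSup_chiOn]
  refine csSup_le ⟨_, ∅, empty_subset _, hempty, rfl⟩ ?_
  rintro _ ⟨L, hL, hLc, rfl⟩
  exact chiOn_le_eight_mul_of_forall_le hA hM hM0 hL hLc hs0 hs

theorem le_chiMackey_of_mem_weaklyNullLimsups (hA : A.Nonempty) (hM : ∀ φ ∈ A, ‖φ‖ ≤ M)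
    {t : ℝ} (ht : t ∈ weaklyNullLimsups A) : t ≤ chiMackey 𝕜 A := by
  obtain ⟨x, hx, hx0, rfl⟩ := ht
  have hsub : insert 0 (range x) ⊆ closedBall (0 : X) 1 :=
    insert_subset (mem_closedBall_self zero_le_one) (range_subset_iff.2 hx)
  have hbdd : BddAbove {r | ∃ L ⊆ closedBall (0 : X) 1, IsWeaklyCompact 𝕜 L ∧ r = chiOn A L} :=
    ⟨2 * M, by
      rintro _ ⟨L, hL, -, rfl⟩
      exact chiOn_le_two_mul hA hM hL⟩
  rw [chiMackey_eq_sSup_chiOn]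
  exact (limsup_supNormOn_le_chiOn hA hM hsub (fun k => mem_insert_of_mem _ ⟨k, rfl⟩) hx0).trans
    (le_csSup hbdd ⟨_, hsub, isWeaklyCompact_insert_zero_range hx0, rfl⟩)

end MackeyMeasure

theorem chiMackey_equiv_sup_weaklyNull_general
    {𝕜 : Type*} [RCLike 𝕜] {X : Type*}
    [NormedAddCommGroup X] [NormedSpace 𝕜 X]
    (A : Set (StrongDual 𝕜 X)) (hA : A.Nonempty) (hbdd : Bornology.IsBounded A) :
    (1 / 8) * chiMackey 𝕜 A ≤
        sSup {r | ∃ x : ℕ → X, (∀ k, x k ∈ closedBall (0 : X) 1) ∧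
          (∀ φ : StrongDual 𝕜 X, Tendsto (fun k => φ (x k)) atTop (nhds 0)) ∧
          r = Filter.limsup (fun k => ⨆ φ : A, ‖(φ : StrongDual 𝕜 X) (x k)‖) atTop} ∧
      sSup {r | ∃ x : ℕ → X, (∀ k, x k ∈ closedBall (0 : X) 1) ∧
          (∀ φ : StrongDual 𝕜 X, Tendsto (fun k => φ (x k)) atTop (nhds 0)) ∧
          r = Filter.limsup (fun k => ⨆ φ : A, ‖(φ : StrongDual 𝕜 X) (x k)‖) atTop} ≤
        chiMackey 𝕜 A := by
  change (1 / 8) * chiMackey 𝕜 A ≤ sSup (weaklyNullLimsups A) ∧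
    sSup (weaklyNullLimsups A) ≤ chiMackey 𝕜 A
  obtain ⟨M, hM0, hM⟩ := hbdd.exists_pos_norm_le
  have hS : BddAbove (weaklyNullLimsups A) := ⟨M, fun _ => le_of_mem_weaklyNullLimsups hM hM0.le⟩
  have h8 := chiMackey_le_eight_mul hA hM hM0.le (le_csSup hS (zero_mem_weaklyNullLimsups A))
    fun _ ht => le_csSup hS ht
  exact ⟨by linarith, csSup_le ⟨0, zero_mem_weaklyNullLimsups A⟩ fun _ ht =>
    le_chiMackey_of_mem_weaklyNullLimsups hA hM ht⟩

/-- For a Banach space `X` and a nonempty bounded set `A ⊆ X*`: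
`(1/8)·χ_m(A) ≤ sup { limsup_k sup_{x*∈A} |x*(x_k)| : (x_k) weakly null in B_X }
  ≤ χ_m(A)`. -/
theorem chiMackey_equiv_sup_weaklyNull
    {𝕜 : Type*} [RCLike 𝕜] {X : Type*}
    [NormedAddCommGroup X] [NormedSpace 𝕜 X] [CompleteSpace X]
    (A : Set (StrongDual 𝕜 X)) (hA : A.Nonempty) (hbdd : Bornology.IsBounded A) :
    (1 / 8) * chiMackey 𝕜 A ≤
        sSup {r | ∃ x : ℕ → X, (∀ k, x k ∈ closedBall (0 : X) 1) ∧
          (∀ φ : StrongDual 𝕜 X, Tendsto (fun k => φ (x k)) atTop (nhds 0)) ∧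
          r = Filter.limsup (fun k => ⨆ φ : A, ‖(φ : StrongDual 𝕜 X) (x k)‖) atTop} ∧
      sSup {r | ∃ x : ℕ → X, (∀ k, x k ∈ closedBall (0 : X) 1) ∧
          (∀ φ : StrongDual 𝕜 X, Tendsto (fun k => φ (x k)) atTop (nhds 0)) ∧
          r = Filter.limsup (fun k => ⨆ φ : A, ‖(φ : StrongDual 𝕜 X) (x k)‖) atTop} ≤
        chiMackey 𝕜 A :=
  chiMackey_equiv_sup_weaklyNull_general A hA hbdd
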